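/- Let ϱ > 0 and 1 ≤ ℓ ≤ k. There exists a constant C = C(ϱ, ℓ) > 0 such that for all t ≥ 4ℓ + 4 and all y ∈ ℝ^k with Σ_{i=1}^{ℓ} y_i² ≤ t, the function f(y,t) = ϱ·√(1 + (1/(2t))·Σ_{i=1}^{ℓ}(y_i² − 2)) − ϱ is well defined and smooth and satisfies | ∂_t f − Δ_y f + (1/2)·⟨y, ∇_y f⟩ − (ϱ + f)/2 + ϱ²/(2(ϱ + f)) | ≤ C·(1 + |y|²)/t². That is, f is an approximate solution of the rotationally invariant rescaled graph equation ∂_t f = Δ f − (1/2)y·∇f + (ϱ+f)/2 − ϱ²/(2(ϱ+f)) with error of size O((1 + |y|²)/t²). -/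

import Mathlib

open Real

/-- The C¹ normal-form profile `f(t,y) = ϱ·√(1 + (1/(2t))·Σ_{i=1}^{ℓ}(y_i² − 2)) − ϱ`
over the cylinder of radius `ϱ`, as a function of time `t` and `y ∈ ℝ^k`. -/
noncomputable def profileF (k ℓ : ℕ) (ϱ : ℝ) (t : ℝ) (y : Fin k → ℝ) : ℝ :=
  ϱ * Real.sqrt (1 + 1 / (2 * t) * ∑ i : Fin k, if (i : ℕ) < ℓ then (y i) ^ 2 - 2 else 0) - ϱ

/-! With `S = Σ_{i<ℓ} y_i²`, `m` the number of such coordinates and `r = √(1 + (S - 2m)/(2t))`,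
the profile is `f = ϱ (r - 1)`. Every coordinate slice `s ↦ f(t, y[i ↦ s])` has the form
`ϱ √(a + b s²) - ϱ` with `a ≥ 3/4` and `b ≥ 0`, so all derivatives are explicit. Eliminating
`S = 2m + 2t(r² - 1)`, the terms of order `1/t` cancel and the error is exactly
`ϱ (2m - (S - 2m)²/(2t)) / (4 t² r³)`; for `S ≤ t` and `4m ≤ t` its numerator is at most
`(5m + S)/2`, while `r³ ≥ 1/2`. -/

open Finset Function

section SqrtQuadratic

variable {a b : ℝ}

theorem hasDerivAt_sqrt_add_mul_sq (ha : 0 < a) (hb : 0 ≤ b) (x : ℝ) :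
    HasDerivAt (fun s => √(a + b * s ^ 2)) (b * x / √(a + b * x ^ 2)) x := by
  have hpos : 0 < a + b * x ^ 2 := by positivity
  have h := (((hasDerivAt_pow 2 x).const_mul b).const_add a).sqrt hpos.ne'
  convert h using 1
  field_simp
  ring

theorem deriv_sqrt_add_mul_sq (ha : 0 < a) (hb : 0 ≤ b) :
    deriv (fun s => √(a + b * s ^ 2)) = fun x => b * x / √(a + b * x ^ 2) :=
  funext fun x => (hasDerivAt_sqrt_add_mul_sq ha hb x).deriv

theorem deriv_deriv_sqrt_add_mul_sq (ha : 0 < a) (hb : 0 ≤ b) (x : ℝ) :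
    deriv (deriv fun s => √(a + b * s ^ 2)) x
      = b / √(a + b * x ^ 2) - b ^ 2 * x ^ 2 / √(a + b * x ^ 2) ^ 3 := by
  have hr : 0 < √(a + b * x ^ 2) := Real.sqrt_pos.mpr (by positivity)
  rw [deriv_sqrt_add_mul_sq ha hb]
  have h : HasDerivAt (fun s => b * s / √(a + b * s ^ 2))
      ((b * √(a + b * x ^ 2) - b * x * (b * x / √(a + b * x ^ 2))) / √(a + b * x ^ 2) ^ 2) x := by
    simpa using ((hasDerivAt_id x).const_mul b).fun_div (hasDerivAt_sqrt_add_mul_sq ha hb x) hr.ne'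
  rw [h.deriv]
  field_simp

end SqrtQuadratic

section HeadCoordinates

variable {k : ℕ} (ℓ : ℕ)

noncomputable def headInd (i : Fin k) : ℝ := if (i : ℕ) < ℓ then 1 else 0

noncomputable def headSqSum (y : Fin k → ℝ) : ℝ := ∑ i, headInd ℓ i * y i ^ 2

theorem headInd_nonneg (i : Fin k) : 0 ≤ headInd ℓ i := by
  unfold headInd; split_ifs <;> norm_num

theorem headInd_le_one (i : Fin k) : headInd ℓ i ≤ 1 := by
  unfold headInd; split_ifs <;> norm_num

theorem headInd_sq (i : Fin k) : headInd ℓ i ^ 2 = headInd ℓ i := by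
  unfold headInd; split_ifs <;> norm_num

theorem sum_headInd : ∑ i : Fin k, headInd ℓ i = (min k ℓ : ℕ) := by
  simp [headInd, Fin.card_filter_val_lt]

theorem sum_ite_sq_eq_headSqSum (y : Fin k → ℝ) :
    (∑ i : Fin k, if (i : ℕ) < ℓ then y i ^ 2 else 0) = headSqSum ℓ y := by
  simp [headSqSum, headInd]

theorem sum_ite_sq_sub_two_eq (y : Fin k → ℝ) :
    (∑ i : Fin k, if (i : ℕ) < ℓ then y i ^ 2 - 2 else 0)
      = headSqSum ℓ y - 2 * (min k ℓ : ℕ) := by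
  rw [← sum_headInd, headSqSum, mul_sum, ← sum_sub_distrib]
  refine sum_congr rfl fun i _ => ?_
  unfold headInd; split_ifs <;> ring

theorem headSqSum_nonneg (y : Fin k → ℝ) : 0 ≤ headSqSum ℓ y :=
  sum_nonneg fun i _ => mul_nonneg (headInd_nonneg ℓ i) (sq_nonneg _)

theorem headSqSum_le_sum_sq (y : Fin k → ℝ) : headSqSum ℓ y ≤ ∑ i, y i ^ 2 :=
  sum_le_sum fun i _ => mul_le_of_le_one_left (sq_nonneg _) (headInd_le_one ℓ i)

theorem headSqSum_update (y : Fin k → ℝ) (i : Fin k) (s : ℝ) :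
    headSqSum ℓ (update y i s) = headSqSum ℓ y + headInd ℓ i * (s ^ 2 - y i ^ 2) := by
  have h : ∀ j, headInd ℓ j * update y i s j ^ 2 - headInd ℓ j * y j ^ 2
      = if j = i then headInd ℓ i * (s ^ 2 - y i ^ 2) else 0 := by
    intro j
    rcases eq_or_ne j i with rfl | hji
    · simp [mul_sub]
    · simp [hji]
  rw [← sub_eq_iff_eq_add', headSqSum, headSqSum, ← sum_sub_distrib, sum_congr rfl fun j _ => h j,
    sum_ite_eq' univ i]
  simp

end HeadCoordinates

section Profile

variable {k ℓ : ℕ} {t : ℝ}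

noncomputable def profileArg (k ℓ : ℕ) (t : ℝ) (y : Fin k → ℝ) : ℝ :=
  1 + (headSqSum ℓ y - 2 * (min k ℓ : ℕ)) / (2 * t)

theorem profileF_eq (ϱ : ℝ) (y : Fin k → ℝ) :
    profileF k ℓ ϱ t y = ϱ * √(profileArg k ℓ t y) - ϱ := by
  rw [profileF, sum_ite_sq_sub_two_eq, one_div_mul_eq_div, profileArg]

theorem add_profileF (ϱ : ℝ) (y : Fin k → ℝ) :
    ϱ + profileF k ℓ ϱ t y = ϱ * √(profileArg k ℓ t y) := by
  rw [profileF_eq]; ring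

theorem three_quarters_le_profileArg (ht : 0 < t) (hℓt : 4 * ℓ ≤ t) (y : Fin k → ℝ) :
    3 / 4 ≤ profileArg k ℓ t y := by
  have hm : ((min k ℓ : ℕ) : ℝ) ≤ ℓ := by exact_mod_cast min_le_right k ℓ
  have hS := headSqSum_nonneg ℓ y
  have : -(1 / 4) ≤ (headSqSum ℓ y - 2 * (min k ℓ : ℕ)) / (2 * t) := by
    rw [le_div_iff₀ (by positivity)]; linarith
  rw [profileArg]; linarith

theorem profileArg_update (y : Fin k → ℝ) (i : Fin k) (s : ℝ) :
    profileArg k ℓ t (update y i s)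
      = profileArg k ℓ t (update y i 0) + headInd ℓ i / (2 * t) * s ^ 2 := by
  simp only [profileArg, headSqSum_update]
  ring

theorem profileF_update (ϱ : ℝ) (y : Fin k → ℝ) (i : Fin k) :
    (fun s => profileF k ℓ ϱ t (update y i s))
      = fun s => ϱ * √(profileArg k ℓ t (update y i 0) + headInd ℓ i / (2 * t) * s ^ 2) - ϱ := by
  funext s
  rw [profileF_eq, profileArg_update]

theorem profileArg_update_self (y : Fin k → ℝ) (i : Fin k) :
    profileArg k ℓ t (update y i 0) + headInd ℓ i / (2 * t) * y i ^ 2 = profileArg k ℓ t y := by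
  rw [← profileArg_update, update_eq_self]

theorem deriv_profileF_update (ϱ : ℝ) (ht : 0 < t) (hℓt : 4 * ℓ ≤ t) (y : Fin k → ℝ) (i : Fin k) :
    deriv (fun s => profileF k ℓ ϱ t (update y i s)) (y i)
      = ϱ * (headInd ℓ i / (2 * t) * y i / √(profileArg k ℓ t y)) := by
  have ha := three_quarters_le_profileArg ht hℓt (update y i 0)
  have hb : 0 ≤ headInd ℓ i / (2 * t) := div_nonneg (headInd_nonneg ℓ i) (by positivity)
  rw [profileF_update, deriv_sub_const, deriv_const_mul_field',
    deriv_sqrt_add_mul_sq (by linarith) hb]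
  beta_reduce
  rw [profileArg_update_self]

theorem deriv_deriv_profileF_update (ϱ : ℝ) (ht : 0 < t) (hℓt : 4 * ℓ ≤ t) (y : Fin k → ℝ)
    (i : Fin k) :
    deriv (deriv fun s => profileF k ℓ ϱ t (update y i s)) (y i)
      = ϱ * (headInd ℓ i / (2 * t) / √(profileArg k ℓ t y)
        - (headInd ℓ i / (2 * t)) ^ 2 * y i ^ 2 / √(profileArg k ℓ t y) ^ 3) := by
  have ha := three_quarters_le_profileArg ht hℓt (update y i 0)
  have hb : 0 ≤ headInd ℓ i / (2 * t) := div_nonneg (headInd_nonneg ℓ i) (by positivity)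
  rw [profileF_update, deriv_sub_const_fun, deriv_const_mul_field', deriv_const_mul_field']
  beta_reduce
  rw [deriv_deriv_sqrt_add_mul_sq (by linarith) hb, profileArg_update_self]

theorem deriv_profileF_time (ϱ : ℝ) (ht : 0 < t) (y : Fin k → ℝ) (hpos : 0 < profileArg k ℓ t y) :
    deriv (fun s => profileF k ℓ ϱ s y) t
      = -ϱ * (headSqSum ℓ y - 2 * (min k ℓ : ℕ)) / (4 * t ^ 2 * √(profileArg k ℓ t y)) := by
  set Q := headSqSum ℓ y - 2 * (min k ℓ : ℕ)
  have harg : (fun s => profileArg k ℓ s y) = fun s => 1 + Q / 2 * s⁻¹ := by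
    funext s; rw [profileArg]; ring
  have h : HasDerivAt (fun s => profileArg k ℓ s y) (Q / 2 * -(t ^ 2)⁻¹) t := by
    rw [harg]; exact ((hasDerivAt_inv ht.ne').const_mul (Q / 2)).const_add 1
  have hr : 0 < √(profileArg k ℓ t y) := Real.sqrt_pos.mpr hpos
  simp only [profileF_eq]
  rw [((h.sqrt hpos.ne').const_mul ϱ).sub_const ϱ |>.deriv]
  field_simp
  ring

theorem sum_deriv_deriv_profileF_update (ϱ : ℝ) (ht : 0 < t) (hℓt : 4 * ℓ ≤ t)
    (y : Fin k → ℝ) :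
    ∑ i, deriv (deriv fun s => profileF k ℓ ϱ t (update y i s)) (y i)
      = ϱ * ((min k ℓ : ℕ) / (2 * t * √(profileArg k ℓ t y))
        - headSqSum ℓ y / (4 * t ^ 2 * √(profileArg k ℓ t y) ^ 3)) := by
  set r := √(profileArg k ℓ t y)
  have hterm : ∀ i, deriv (deriv fun s => profileF k ℓ ϱ t (update y i s)) (y i)
      = ϱ / (2 * t * r) * headInd ℓ i - ϱ / (4 * t ^ 2 * r ^ 3) * (headInd ℓ i * y i ^ 2) := by
    intro i
    rw [deriv_deriv_profileF_update ϱ ht hℓt, div_pow, headInd_sq]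
    ring
  rw [sum_congr rfl fun i _ => hterm i, sum_sub_distrib, ← mul_sum, ← mul_sum, sum_headInd,
    ← headSqSum]
  ring

theorem sum_mul_deriv_profileF_update (ϱ : ℝ) (ht : 0 < t) (hℓt : 4 * ℓ ≤ t)
    (y : Fin k → ℝ) :
    ∑ i, y i * deriv (fun s => profileF k ℓ ϱ t (update y i s)) (y i)
      = ϱ * (headSqSum ℓ y / (2 * t * √(profileArg k ℓ t y))) := by
  simp_rw [deriv_profileF_update ϱ ht hℓt]
  rw [headSqSum, sum_div, mul_sum]
  refine sum_congr rfl fun i _ => ?_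
  ring

end Profile

section ErrorTerm

variable {ϱ t r m S : ℝ}

theorem profile_error_eq (hϱ : ϱ ≠ 0) (ht : t ≠ 0) (hr : r ≠ 0)
    (hr2 : r ^ 2 = 1 + (S - 2 * m) / (2 * t)) :
    -ϱ * (S - 2 * m) / (4 * t ^ 2 * r) - ϱ * (m / (2 * t * r) - S / (4 * t ^ 2 * r ^ 3))
        + 1 / 2 * (ϱ * (S / (2 * t * r))) - ϱ * r / 2 + ϱ ^ 2 / (2 * (ϱ * r))
      = ϱ * (2 * m - (S - 2 * m) ^ 2 / (2 * t)) / (4 * t ^ 2 * r ^ 3) := by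
  obtain rfl : S = 2 * m + 2 * t * (r ^ 2 - 1) := by field_simp at hr2; linarith
  field_simp
  ring

theorem abs_two_mul_sub_sq_div_le (ht : 0 < t) (hm : 0 ≤ m) (hmt : 4 * m ≤ t) (hS : 0 ≤ S)
    (hSt : S ≤ t) :
    |2 * m - (S - 2 * m) ^ 2 / (2 * t)| ≤ (5 * m + S) / 2 := by
  have hsq : (S - 2 * m) ^ 2 ≤ t * (m + S) := by
    rcases le_total (2 * m) S with h | h <;> nlinarith
  have hdiv : (S - 2 * m) ^ 2 / (2 * t) ≤ (m + S) / 2 := by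
    rw [div_le_iff₀ (by positivity)]; nlinarith
  have hdiv0 : 0 ≤ (S - 2 * m) ^ 2 / (2 * t) := by positivity
  rw [abs_le]; constructor <;> linarith

theorem abs_profile_error_le (hϱ : 0 < ϱ) (ht : 0 < t) (hm : 0 ≤ m) (hmt : 4 * m ≤ t)
    (hS : 0 ≤ S) (hSt : S ≤ t) (hr : 0 < r) (hr2 : 3 / 4 ≤ r ^ 2) :
    |ϱ * (2 * m - (S - 2 * m) ^ 2 / (2 * t)) / (4 * t ^ 2 * r ^ 3)|
      ≤ ϱ * (5 * m + S) / (4 * t ^ 2) := by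
  have hr1 : 3 / 4 ≤ r := by nlinarith
  have hr3 : 1 / 2 ≤ r ^ 3 := by nlinarith
  rw [abs_div, abs_mul, abs_of_pos hϱ, abs_of_pos (by positivity : 0 < 4 * t ^ 2 * r ^ 3)]
  calc ϱ * |2 * m - (S - 2 * m) ^ 2 / (2 * t)| / (4 * t ^ 2 * r ^ 3)
      ≤ ϱ * ((5 * m + S) / 2) / (4 * t ^ 2 * (1 / 2)) := by
        gcongr
        exact abs_two_mul_sub_sq_div_le ht hm hmt hS hSt
    _ = ϱ * (5 * m + S) / (4 * t ^ 2) := by field_simp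

end ErrorTerm

theorem profile_approximate_solution_general (k ℓ : ℕ) (ϱ : ℝ) (hϱ : 0 < ϱ) :
    ∃ C : ℝ, 0 < C ∧
      ∀ t : ℝ, (4 * ℓ + 4 : ℝ) ≤ t →
        ∀ y : Fin k → ℝ, (∑ i : Fin k, if (i : ℕ) < ℓ then (y i) ^ 2 else 0) ≤ t →
          (0 < 1 + 1 / (2 * t) * ∑ i : Fin k, if (i : ℕ) < ℓ then (y i) ^ 2 - 2 else 0) ∧
          |deriv (fun s => profileF k ℓ ϱ s y) t
              - (∑ i : Fin k,
                  deriv (deriv fun s => profileF k ℓ ϱ t (Function.update y i s)) (y i))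
              + 1 / 2 * ∑ i : Fin k,
                  y i * deriv (fun s => profileF k ℓ ϱ t (Function.update y i s)) (y i)
              - (ϱ + profileF k ℓ ϱ t y) / 2
              + ϱ ^ 2 / (2 * (ϱ + profileF k ℓ ϱ t y))|
            ≤ C * (1 + ∑ i : Fin k, (y i) ^ 2) / t ^ 2 := by
  refine ⟨5 * ϱ * (ℓ + 1) / 4, by positivity, fun t ht y hyt => ?_⟩
  have ht0 : 0 < t := by linarith [(Nat.cast_nonneg ℓ : (0 : ℝ) ≤ ℓ)]
  have hℓt : 4 * (ℓ : ℝ) ≤ t := by linarith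
  have hmℓ : ((min k ℓ : ℕ) : ℝ) ≤ ℓ := by exact_mod_cast min_le_right k ℓ
  have hSN := headSqSum_le_sum_sq ℓ y
  have harg := three_quarters_le_profileArg ht0 hℓt y
  have hr : 0 < √(profileArg k ℓ t y) := Real.sqrt_pos.mpr (by linarith)
  have hr2 : √(profileArg k ℓ t y) ^ 2 = profileArg k ℓ t y := Real.sq_sqrt (by linarith)
  rw [sum_ite_sq_eq_headSqSum] at hyt
  refine ⟨by rw [sum_ite_sq_sub_two_eq, one_div_mul_eq_div]; exact harg.trans_lt' (by norm_num), ?_⟩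
  rw [deriv_profileF_time ϱ ht0 y (by linarith), sum_deriv_deriv_profileF_update ϱ ht0 hℓt,
    sum_mul_deriv_profileF_update ϱ ht0 hℓt, add_profileF,
    profile_error_eq hϱ.ne' ht0.ne' hr.ne' hr2]
  calc _ ≤ ϱ * (5 * (min k ℓ : ℕ) + headSqSum ℓ y) / (4 * t ^ 2) :=
        abs_profile_error_le hϱ ht0 (Nat.cast_nonneg _) (by linarith) (headSqSum_nonneg ℓ y) hyt hr
          (by rw [hr2]; exact harg)
    _ ≤ ϱ * (5 * (ℓ + 1) * (1 + ∑ i, y i ^ 2)) / (4 * t ^ 2) := by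
        gcongr
        nlinarith [headSqSum_nonneg ℓ y, (Nat.cast_nonneg ℓ : (0 : ℝ) ≤ ℓ)]
    _ = 5 * ϱ * (ℓ + 1) / 4 * (1 + ∑ i, y i ^ 2) / t ^ 2 := by field_simp

/-- `f(y,t) = ϱ√(1 + (1/(2t))Σ_{i=1}^{ℓ}(y_i² − 2)) − ϱ` is an approximate solution of the
rotationally invariant rescaled graph equation
`∂_t f = Δf − (1/2)y·∇f + (ϱ+f)/2 − ϱ²/(2(ϱ+f))`, with error of size `C(1 + |y|²)/t²`
on the region `t ≥ 4ℓ + 4`, `Σ_{i=1}^{ℓ} y_i² ≤ t` (where the square root is of a positive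
quantity, so `f` is well defined and smooth there).  Here the Laplacian is the sum of pure
second partial derivatives and `y·∇f = Σ_i y_i ∂_i f`. -/
theorem profile_approximate_solution (k ℓ : ℕ) (hℓ : 1 ≤ ℓ) (hk : ℓ ≤ k)
    (ϱ : ℝ) (hϱ : 0 < ϱ) :
    ∃ C : ℝ, 0 < C ∧
      ∀ t : ℝ, (4 * ℓ + 4 : ℝ) ≤ t →
        ∀ y : Fin k → ℝ, (∑ i : Fin k, if (i : ℕ) < ℓ then (y i) ^ 2 else 0) ≤ t →
          (0 < 1 + 1 / (2 * t) * ∑ i : Fin k, if (i : ℕ) < ℓ then (y i) ^ 2 - 2 else 0) ∧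
          |deriv (fun s => profileF k ℓ ϱ s y) t
              - (∑ i : Fin k,
                  deriv (deriv fun s => profileF k ℓ ϱ t (Function.update y i s)) (y i))
              + 1 / 2 * ∑ i : Fin k,
                  y i * deriv (fun s => profileF k ℓ ϱ t (Function.update y i s)) (y i)
              - (ϱ + profileF k ℓ ϱ t y) / 2
              + ϱ ^ 2 / (2 * (ϱ + profileF k ℓ ϱ t y))|
            ≤ C * (1 + ∑ i : Fin k, (y i) ^ 2) / t ^ 2 :=
  profile_approximate_solution_general k ℓ ϱ hϱ
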